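/- arXiv:1401.3173 — 2 statements merged into one kernel-verified Lean document; each statement's English description precedes it below -/
import Mathlib

section
/- Let D₁ be a deterministic finite automaton over the alphabet α × β₁ with finite state type Q₁ and D₂ a deterministic finite automaton over the alphabet α × β₂ with finite state type Q₂. Then there exists a deterministic finite automaton D over the alphabet α × (β₁ × β₂) with state type Q₁ × Q₂ such that π(D.accepts) = π(D₁.accepts) ∩ π(D₂.accepts). -/
/-- The projection of a language over a product alphabet `α × β` onto `α`,
obtained by mapping each letter of each word to its first component. -/
def projLang {α β : Type} (L : Language (α × β)) : Set (List α) :=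
  (fun w : List (α × β) => w.map Prod.fst) '' L

/-! `D` is the product of `D₁` and `D₂`, each reading its own projection `(a, b₁)` or `(a, b₂)` of
a letter `(a, (b₁, b₂))`. Projecting its language to `α` gives the intersection because two
words over `α × β₁` and `α × β₂` with the same `α`-projection zip to one word over
`α × (β₁ × β₂)`. -/

theorem List.exists_map_eq_of_map_fst_eq {α β₁ β₂ : Type} :
    ∀ {u : List (α × β₁)} {v : List (α × β₂)}, u.map Prod.fst = v.map Prod.fst →
      ∃ w : List (α × β₁ × β₂), w.map (Prod.map id Prod.fst) = u ∧ w.map (Prod.map id Prod.snd) = v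
  | [], [], _ => ⟨[], rfl, rfl⟩
  | (a, b₁) :: u, (_, b₂) :: v, h => by
    obtain ⟨rfl, htail⟩ := List.cons_eq_cons.mp h
    obtain ⟨w, rfl, rfl⟩ := exists_map_eq_of_map_fst_eq htail
    exact ⟨(a, b₁, b₂) :: w, rfl, rfl⟩

theorem projLang_preimage_inter_preimage {α β₁ β₂ : Type} (L₁ : Language (α × β₁))
    (L₂ : Language (α × β₂)) :
    projLang (List.map (Prod.map id Prod.fst) ⁻¹' L₁ ⊓ List.map (Prod.map id Prod.snd) ⁻¹' L₂) =
      projLang L₁ ∩ projLang L₂ := by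
  ext s
  constructor
  · rintro ⟨w, ⟨hw₁, hw₂⟩, rfl⟩
    exact ⟨⟨_, hw₁, by simp⟩, ⟨_, hw₂, by simp⟩⟩
  · rintro ⟨⟨u, hu, rfl⟩, ⟨v, hv, huv⟩⟩
    obtain ⟨w, rfl, rfl⟩ := List.exists_map_eq_of_map_fst_eq huv.symm
    exact ⟨w, ⟨hu, hv⟩, by simp⟩

theorem dfa_conjunction_free_inputs_general {α β₁ β₂ Q₁ Q₂ : Type}
    (D₁ : DFA (α × β₁) Q₁) (D₂ : DFA (α × β₂) Q₂) :
    ∃ D : DFA (α × (β₁ × β₂)) (Q₁ × Q₂),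
      projLang D.accepts = projLang D₁.accepts ∩ projLang D₂.accepts := by
  refine ⟨(D₁.comap (Prod.map id Prod.fst)).inter (D₂.comap (Prod.map id Prod.snd)), ?_⟩
  rw [DFA.accepts_inter, DFA.accepts_comap, DFA.accepts_comap]
  exact projLang_preimage_inter_preimage D₁.accepts D₂.accepts

/-- Product construction for conjunction: given DFAs `D₁` over `α × β₁` and `D₂` over
`α × β₂` with finite state types `Q₁` and `Q₂`, there is a DFA `D` over `α × (β₁ × β₂)`
with state type `Q₁ × Q₂` such that `π(D.accepts) = π(D₁.accepts) ∩ π(D₂.accepts)`. -/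
theorem dfa_conjunction_free_inputs {α β₁ β₂ Q₁ Q₂ : Type} [Fintype Q₁] [Fintype Q₂]
    (D₁ : DFA (α × β₁) Q₁) (D₂ : DFA (α × β₂) Q₂) :
    ∃ D : DFA (α × (β₁ × β₂)) (Q₁ × Q₂),
      projLang D.accepts = projLang D₁.accepts ∩ projLang D₂.accepts :=
  dfa_conjunction_free_inputs_general D₁ D₂
end

section
/- Let β₁ and β₂ be nonempty types, let D₁ be a deterministic finite automaton over the alphabet α × β₁ with finite state type Q₁, and let D₂ be a deterministic finite automaton over the alphabet α × β₂ with finite state type Q₂. Then there exists a deterministic finite automaton D over the alphabet α × (β₁ × β₂) with state type Q₁ × Q₂ such that π(D.accepts) = π(D₁.accepts) ∪ π(D₂.accepts). -/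
theorem projLang_add {α β : Type} (L₁ L₂ : Language (α × β)) :
    projLang (L₁ + L₂) = projLang L₁ ∪ projLang L₂ :=
  Set.image_union _ L₁ L₂

theorem projLang_preimage_map_prodMap {α β γ : Type} {g : γ → β} (hg : g.Surjective)
    (L : Language (α × β)) :
    projLang (List.map (Prod.map (id : α → α) g) ⁻¹' L : Language (α × γ)) = projLang L := by
  set f : α × γ → α × β := Prod.map id g
  have hf : (List.map f).Surjective :=
    List.map_surjective_iff.mpr (Function.surjective_id.prodMap hg)
  calc projLang (List.map f ⁻¹' L : Language (α × γ))
      = List.map Prod.fst '' (List.map f '' (List.map f ⁻¹' L)) := by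
        simp only [projLang, Set.image_image, List.map_map]
        rfl
    _ = projLang L := by rw [Set.image_preimage_eq L hf]; rfl

theorem projLang_accepts_comap_prodMap {α β γ Q : Type} {g : γ → β} (hg : g.Surjective)
    (M : DFA (α × β) Q) :
    projLang (M.comap (Prod.map (id : α → α) g)).accepts = projLang M.accepts := by
  rw [DFA.accepts_comap, projLang_preimage_map_prodMap hg]

theorem dfa_disjunction_free_inputs_general {α β₁ β₂ Q₁ Q₂ : Type} [Nonempty β₁] [Nonempty β₂]
    (D₁ : DFA (α × β₁) Q₁) (D₂ : DFA (α × β₂) Q₂) :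
    ∃ D : DFA (α × (β₁ × β₂)) (Q₁ × Q₂),
      projLang D.accepts = projLang D₁.accepts ∪ projLang D₂.accepts :=
  ⟨(D₁.comap (Prod.map id Prod.fst)).union (D₂.comap (Prod.map id Prod.snd)), by
    rw [DFA.accepts_union, projLang_add, projLang_accepts_comap_prodMap Prod.fst_surjective,
      projLang_accepts_comap_prodMap Prod.snd_surjective]⟩

/-- Product construction for disjunction: given nonempty types `β₁`, `β₂` and DFAs `D₁`
over `α × β₁` and `D₂` over `α × β₂` with finite state types `Q₁` and `Q₂`, there is a DFA
`D` over `α × (β₁ × β₂)` with state type `Q₁ × Q₂` such that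
`π(D.accepts) = π(D₁.accepts) ∪ π(D₂.accepts)`. -/
theorem dfa_disjunction_free_inputs {α β₁ β₂ Q₁ Q₂ : Type} [Nonempty β₁] [Nonempty β₂]
    [Fintype Q₁] [Fintype Q₂] (D₁ : DFA (α × β₁) Q₁) (D₂ : DFA (α × β₂) Q₂) :
    ∃ D : DFA (α × (β₁ × β₂)) (Q₁ × Q₂),
      projLang D.accepts = projLang D₁.accepts ∪ projLang D₂.accepts :=
  dfa_disjunction_free_inputs_general D₁ D₂
end
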